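/- Let $R = k[x_1,\dots,x_m]$ and let $I$ be a ${}^*$strongly Golod monomial ideal, i.e. $\partial^*(I)^2 \subseteq I$. Then the integral closure $\overline{I}$ is also ${}^*$strongly Golod, i.e. $\partial^*(\overline{I})^2 \subseteq \overline{I}$. -/

import Mathlib

open MvPolynomial

variable {m : ℕ} {k : Type*}

/-- An ideal of `k[x_1, …, x_m]` is a monomial ideal if it is generated by monomials. -/
def IsMonomialIdeal [Field k] (I : Ideal (MvPolynomial (Fin m) k)) : Prop :=
  ∃ S : Set (Fin m →₀ ℕ), I = Ideal.span ((fun e => monomial e (1 : k)) '' S)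

/-- `e` is the exponent vector of a minimal monomial generator of `I`: the monomial `x^e`
lies in `I` and no proper divisor of it lies in `I`. -/
def IsMinMonomialGen [Field k] (I : Ideal (MvPolynomial (Fin m) k)) (e : Fin m →₀ ℕ) : Prop :=
  monomial e (1 : k) ∈ I ∧ ∀ e' : Fin m →₀ ℕ, e' ≤ e → e' ≠ e → monomial e' (1 : k) ∉ I

/-- `∂*(I)`: the ideal generated by all quotients `f / x_i`, where `f` runs over the minimal
monomial generators of `I` and `x_i` over the variables dividing `f`. -/
noncomputable def partialStar [Field k] (I : Ideal (MvPolynomial (Fin m) k)) :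
    Ideal (MvPolynomial (Fin m) k) :=
  Ideal.span { p | ∃ (e : Fin m →₀ ℕ) (i : Fin m), IsMinMonomialGen I e ∧ e i ≠ 0 ∧
    p = monomial (e - Finsupp.single i 1) (1 : k) }

/-- The integral closure of a monomial ideal `I`: the (monomial) ideal generated by the
monomials `f` such that `f^r ∈ I^r` for some `r ≥ 1`. -/
noncomputable def monomialIntegralClosure [Field k] (I : Ideal (MvPolynomial (Fin m) k)) :
    Ideal (MvPolynomial (Fin m) k) :=
  Ideal.span { p | ∃ (e : Fin m →₀ ℕ) (r : ℕ), 1 ≤ r ∧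
    (monomial e (1 : k)) ^ r ∈ I ^ r ∧ p = monomial e (1 : k) }

/-!
For a monomial ideal `I`, a monomial `x^c` lies in `Ī` iff `x^(r c) ∈ I^r` for some `r ≥ 1`, i.e.
iff `c` lies in the Newton polyhedron of `I`. The *strongly Golod condition gives `(u / x_i)² ∈ I`
for every monomial `u ∈ I` divisible by `x_i`, not only for minimal generators, and this property
passes to `Ī`: if `x^(r a)` is divisible by a product `x^q₁ ⋯ x^qᵣ` of monomials of `I` and
`n = a_i ≥ 1`, then replacing each `x^(2n qⱼ)` by a product of at least `2n - qⱼ,ᵢ` monomials of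
`I` with `x_i`-degree at most `2(n - 1) qⱼ,ᵢ` (copies of `x^qⱼ`, plus one `(x^qⱼ / x_i)²` when
`qⱼ,ᵢ = 1`) shows `x^(2rn (a - e_i)) ∈ I^(rn)`. Finally, the exponents of
monomials of `Ī` are closed under midpoints, so `(x^a / x_i)(x^b / x_j) ∈ Ī` because both
squares are.
-/

open Finsupp

section
variable {σ R : Type*} [CommSemiring R]

theorem monomial_one_mem_of_le {J : Ideal (MvPolynomial σ R)} {e c : σ →₀ ℕ} (h : e ≤ c)
    (he : monomial e (1 : R) ∈ J) : monomial c (1 : R) ∈ J := by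
  rw [← tsub_add_cancel_of_le h, ← one_mul (1 : R), ← monomial_mul]
  exact J.mul_mem_left _ he

open Pointwise in
theorem exists_sum_le_of_monomial_mem_span_pow [Nontrivial R] {S : Set (σ →₀ ℕ)}
    {c : σ →₀ ℕ} {r : ℕ}
    (hc : monomial c (1 : R) ∈ Ideal.span ((fun s => monomial s (1 : R)) '' S) ^ r) :
    ∃ q : Fin r → σ →₀ ℕ, (∀ j, q j ∈ S) ∧ ∑ j, q j ≤ c := by
  classical
  have hpow : ((fun s => monomial s (1 : R)) '' S) ^ r ⊆
      (fun s => monomial s (1 : R)) ''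
        {t | ∃ q : Fin r → σ →₀ ℕ, (∀ j, q j ∈ S) ∧ ∑ j, q j = t} := by
    intro x hx
    obtain ⟨f, rfl⟩ := Set.mem_pow.mp hx
    choose q hqS hq using fun j => (f j).2
    refine ⟨∑ j, q j, ⟨q, hqS, rfl⟩, ?_⟩
    simp only [monomial_sum_one, hq, List.prod_ofFn]
  rw [Ideal.span, Submodule.span_pow] at hc
  obtain ⟨t, ⟨q, hqS, rfl⟩, hle⟩ :=
    mem_ideal_span_monomial_image.mp (Submodule.span_mono hpow hc) c (by simp)
  exact ⟨q, hqS, hle⟩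

def QuotientSquaresMem (I : Ideal (MvPolynomial σ R)) : Prop :=
  ∀ (e : σ →₀ ℕ) (i : σ), monomial e (1 : R) ∈ I → e i ≠ 0 →
    monomial (2 • (e - single i 1)) (1 : R) ∈ I

theorem QuotientSquaresMem.monomial_mem_pow {I : Ideal (MvPolynomial σ R)}
    (hI : QuotientSquaresMem I) {q : σ →₀ ℕ} (hq : monomial q (1 : R) ∈ I) (i : σ) {n : ℕ}
    (hn : n ≠ 0) :
    monomial ((2 * n) • q - single i (2 * q i)) (1 : R) ∈ I ^ (2 * n - q i) := by
  have hpow : ∀ l, monomial (l • q) (1 : R) ∈ I ^ l := fun l => by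
    simpa [monomial_pow] using Ideal.pow_mem_pow hq l
  rcases Nat.lt_trichotomy (q i) 1 with hqi | hqi | hqi
  · rw [Nat.lt_one_iff.mp hqi, mul_zero, single_zero, tsub_zero, tsub_zero]
    exact hpow _
  · have hmem : monomial ((2 * n - 2) • q + 2 • (q - single i 1)) (1 : R) ∈ I ^ (2 * n - 1) := by
      rw [← one_mul (1 : R), ← monomial_mul, show 2 * n - 1 = 2 * n - 2 + 1 by omega, pow_succ]
      exact Ideal.mul_mem_mul (hpow _) (hI q i hq (by omega))
    refine monomial_one_mem_of_le (fun p => ?_) (hqi ▸ hmem)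
    rcases eq_or_ne p i with rfl | hp
    · simp [hqi]
    · simp [single_eq_of_ne hp, ← add_mul, Nat.sub_add_cancel (by omega : 2 ≤ 2 * n)]
  · refine monomial_one_mem_of_le (fun p => ?_)
      (Ideal.pow_le_pow_right (by omega) (hpow (2 * n - 2)))
    rcases eq_or_ne p i with rfl | hp
    · simp [Nat.sub_mul]
    · simpa [single_eq_of_ne hp] using Nat.mul_le_mul_right (q p) (Nat.sub_le (2 * n) 2)

end

section
variable [Field k] {I : Ideal (MvPolynomial (Fin m) k)}

theorem monomial_mem_monomialIntegralClosure_iff {c : Fin m →₀ ℕ} :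
    monomial c (1 : k) ∈ monomialIntegralClosure I ↔
      ∃ r, 1 ≤ r ∧ monomial (r • c) (1 : k) ∈ I ^ r := by
  classical
  refine ⟨fun hc => ?_, fun ⟨r, hr, hc⟩ =>
    Ideal.subset_span ⟨c, r, hr, by simpa [monomial_pow], rfl⟩⟩
  have hset : { p | ∃ (e : Fin m →₀ ℕ) (r : ℕ), 1 ≤ r ∧
      (monomial e (1 : k)) ^ r ∈ I ^ r ∧ p = monomial e (1 : k) } =
      (fun e => monomial e (1 : k)) '' {e | ∃ r, 1 ≤ r ∧ monomial (r • e) (1 : k) ∈ I ^ r} := by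
    ext p
    simp only [monomial_pow, one_pow, Set.mem_image]
    grind
  rw [monomialIntegralClosure, hset, mem_ideal_span_monomial_image] at hc
  obtain ⟨e, ⟨r, hr, he⟩, hle⟩ := hc c (by simp)
  exact ⟨r, hr, monomial_one_mem_of_le (nsmul_le_nsmul_right hle r) he⟩

theorem exists_isMinMonomialGen_le {e : Fin m →₀ ℕ} (he : monomial e (1 : k) ∈ I) :
    ∃ g ≤ e, IsMinMonomialGen I g := by
  obtain ⟨g, ⟨hge, hg⟩, hmin⟩ := wellFounded_lt.has_min
    {g : Fin m →₀ ℕ | g ≤ e ∧ monomial g (1 : k) ∈ I} ⟨e, le_rfl, he⟩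
  exact ⟨g, hge, hg, fun g' hle hne hg' =>
    hmin g' ⟨hle.trans hge, hg'⟩ (lt_of_le_of_ne hle hne)⟩

theorem quotientSquaresMem_of_partialStar_mul_le (hsg : partialStar I * partialStar I ≤ I) :
    QuotientSquaresMem I := by
  intro e i he hei
  obtain ⟨g, hge, hg⟩ := exists_isMinMonomialGen_le he
  by_cases hgi : g i = 0
  · refine monomial_one_mem_of_le (fun p => ?_) hg.1
    rcases eq_or_ne p i with rfl | hp
    · simp [hgi]
    · simpa [single_eq_of_ne hp] using (hge p).trans (Nat.le_mul_of_pos_left _ two_pos)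
  · have hquot : monomial (g - single i 1) (1 : k) ∈ partialStar I :=
      Ideal.subset_span ⟨g, i, hg, hgi, rfl⟩
    have hsq := hsg (Ideal.mul_mem_mul hquot hquot)
    rw [monomial_mul, one_mul, ← two_nsmul] at hsq
    exact monomial_one_mem_of_le (nsmul_le_nsmul_right (tsub_le_tsub_right hge _) 2) hsq

theorem monomial_add_mem_monomialIntegralClosure {u v : Fin m →₀ ℕ}
    (hu : monomial (2 • u) (1 : k) ∈ monomialIntegralClosure I)
    (hv : monomial (2 • v) (1 : k) ∈ monomialIntegralClosure I) :
    monomial (u + v) (1 : k) ∈ monomialIntegralClosure I := by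
  obtain ⟨r, hr, hu⟩ := monomial_mem_monomialIntegralClosure_iff.mp hu
  obtain ⟨s, hs, hv⟩ := monomial_mem_monomialIntegralClosure_iff.mp hv
  refine monomial_mem_monomialIntegralClosure_iff.mpr
    ⟨2 * (r * s), Nat.one_le_iff_ne_zero.mpr (by positivity), ?_⟩
  have huv := Ideal.mul_mem_mul (Ideal.pow_mem_pow hu s) (Ideal.pow_mem_pow hv r)
  rw [← pow_mul, ← pow_mul, mul_comm s r, ← pow_add, ← two_mul, monomial_pow, monomial_pow,
    monomial_mul] at huv
  simpa [smul_add, smul_smul, mul_comm, mul_assoc, mul_left_comm] using huv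

theorem QuotientSquaresMem.monomialIntegralClosure (hmon : IsMonomialIdeal I)
    (hI : QuotientSquaresMem I) : QuotientSquaresMem (monomialIntegralClosure I) := by
  intro a i ha hai
  obtain ⟨S, hS⟩ := hmon
  obtain ⟨r, hr, hra⟩ := monomial_mem_monomialIntegralClosure_iff.mp ha
  obtain ⟨q, hqS, hsum⟩ := exists_sum_le_of_monomial_mem_span_pow (hS ▸ hra)
  have hqI : ∀ j, monomial (q j) (1 : k) ∈ I := fun j =>
    hS ▸ Ideal.subset_span ⟨q j, hqS j, rfl⟩
  set n := a i
  have hprod : monomial (∑ j, ((2 * n) • q j - single i (2 * q j i))) (1 : k) ∈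
      I ^ ∑ j, (2 * n - q j i) := by
    rw [monomial_sum_one, ← Finset.prod_pow_eq_pow_sum]
    exact Ideal.prod_mem_prod fun j _ => hI.monomial_mem_pow (hqI j) i hai
  have hΔ : ∑ j, q j i ≤ r * n := by simpa using hsum i
  have hcard : r * n ≤ ∑ j, (2 * n - q j i) := by
    have h2n : ∑ _j : Fin r, 2 * n ≤ ∑ j, (2 * n - q j i) + ∑ j, q j i := by
      rw [← Finset.sum_add_distrib]
      exact Finset.sum_le_sum fun j _ => le_tsub_add
    simp only [Finset.sum_const, Finset.card_univ, Fintype.card_fin, smul_eq_mul,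
      mul_left_comm r 2 n] at h2n
    omega
  refine monomial_mem_monomialIntegralClosure_iff.mpr
    ⟨r * n, Nat.one_le_iff_ne_zero.mpr (by positivity), ?_⟩
  refine monomial_one_mem_of_le (fun p => ?_) (Ideal.pow_le_pow_right hcard hprod)
  have hsum_p : ∑ j, q j p ≤ r * a p := by simpa using hsum p
  by_cases hp : p = i
  · subst hp
    simp only [finsetSum_apply, Finsupp.tsub_apply, Finsupp.smul_apply, smul_eq_mul,
      single_eq_same, ← Nat.sub_mul, ← Finset.mul_sum]
    calc (2 * n - 2) * ∑ j, q j p ≤ (2 * n - 2) * (r * n) := Nat.mul_le_mul_left _ hΔ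
      _ = r * n * (2 * (n - 1)) := by rw [show 2 * n - 2 = 2 * (n - 1) by omega]; ring
  · simp only [finsetSum_apply, Finsupp.tsub_apply, Finsupp.smul_apply, smul_eq_mul,
      single_eq_of_ne hp, tsub_zero, ← Finset.mul_sum]
    calc 2 * n * ∑ j, q j p ≤ 2 * n * (r * a p) := Nat.mul_le_mul_left _ hsum_p
      _ = r * n * (2 * a p) := by ring

end

/-- If `I` is a `*`strongly Golod monomial ideal (`∂*(I)² ⊆ I`), then so is its integral
closure. -/
theorem integralClosure_strongly_golod [Field k] (I : Ideal (MvPolynomial (Fin m) k))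
    (hmon : IsMonomialIdeal I) (hsg : partialStar I * partialStar I ≤ I) :
    partialStar (monomialIntegralClosure I) * partialStar (monomialIntegralClosure I)
      ≤ monomialIntegralClosure I := by
  have hsq := (quotientSquaresMem_of_partialStar_mul_le hsg).monomialIntegralClosure hmon
  rw [partialStar, Ideal.span_mul_span', Ideal.span_le]
  rintro _ ⟨_, ⟨a, i, ha, hai, rfl⟩, _, ⟨b, j, hb, hbj, rfl⟩, rfl⟩
  simpa only [SetLike.mem_coe, monomial_mul, one_mul] using
    monomial_add_mem_monomialIntegralClosure (hsq a i ha.1 hai) (hsq b j hb.1 hbj)
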